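/- Let n = 4 and let ℓᵢⱼ(𝐬) (for 1 ≤ i < j ≤ 4) index variables s_{ij}, with ℓ_k(𝐬) = Σ_{\{i,j\} ∋ k} s_{ij} for k = 1,…,4, and define 𝔞 ⊆ ℚ[s_{ij} : i<j] as the ideal generated by g_c = ∏_{(i,j): c_{ij}<0} C(s_{ij},-c_{ij}) · ∏_{k: ℓ_k(c)>0} C(ℓ_k(𝐬)+ℓ_k(c), ℓ_k(c)) over all integer vectors c = (c_{ij}) with Σc_{ij} = 1, where C(u,m) = u(u-1)⋯(u-m+1)/m!. Then the ideal {b ∈ ℚ[t] : b(Σ_{i<j} s_{ij}) ∈ 𝔞} of ℚ[t] is generated by (t+2)(t+5/2)(t+3). -/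
import Mathlib


open MvPolynomial

/-- The index set of pairs `i < j` in `Fin 4`. -/
abbrev PairIdx : Type := {p : Fin 4 × Fin 4 // p.1 < p.2}

/-- The binomial coefficient polynomial `C(u,m) = u(u-1)⋯(u-m+1)/m!`. -/
noncomputable def binom (u : MvPolynomial PairIdx ℚ) (m : ℕ) : MvPolynomial PairIdx ℚ :=
  ((m.factorial : ℚ)⁻¹) • ∏ i ∈ Finset.range m, (u - (i : MvPolynomial PairIdx ℚ))

/-- `ℓ_k(𝐬) = ∑_{{i,j} ∋ k} s_{ij}` in `ℚ[s_{ij} : i < j]`. -/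
noncomputable def ellS (k : Fin 4) : MvPolynomial PairIdx ℚ :=
  ∑ p ∈ Finset.univ.filter (fun p : PairIdx => p.1.1 = k ∨ p.1.2 = k), X p

/-- `ℓ_k(c) = ∑_{{i,j} ∋ k} c_{ij}` for `c : PairIdx → ℤ`. -/
def ellZ (k : Fin 4) (c : PairIdx → ℤ) : ℤ :=
  ∑ p ∈ Finset.univ.filter (fun p : PairIdx => p.1.1 = k ∨ p.1.2 = k), c p

/-- `g_c = ∏_{(i,j) : c_{ij}<0} C(s_{ij},-c_{ij}) · ∏_{k : ℓ_k(c)>0} C(ℓ_k(𝐬)+ℓ_k(c), ℓ_k(c))`. -/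
noncomputable def gc (c : PairIdx → ℤ) : MvPolynomial PairIdx ℚ :=
  (∏ p ∈ Finset.univ.filter (fun p : PairIdx => c p < 0), binom (X p) (-(c p)).toNat) *
  (∏ k ∈ Finset.univ.filter (fun k : Fin 4 => 0 < ellZ k c),
    binom (ellS k + ((ellZ k c).toNat : MvPolynomial PairIdx ℚ)) (ellZ k c).toNat)

/-- The Bernstein–Sato ideal `𝔞` generated by the `g_c` with `∑ c_{ij} = 1`. -/
noncomputable def af : Ideal (MvPolynomial PairIdx ℚ) :=
  Ideal.span {q | ∃ c : PairIdx → ℤ, (∑ p, c p) = 1 ∧ q = gc c}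



-- auxiliary material
def P01 : PairIdx := ⟨(0,1), by decide⟩
def P02 : PairIdx := ⟨(0,2), by decide⟩
def P03 : PairIdx := ⟨(0,3), by decide⟩
def P12 : PairIdx := ⟨(1,2), by decide⟩
def P13 : PairIdx := ⟨(1,3), by decide⟩
def P23 : PairIdx := ⟨(2,3), by decide⟩

lemma univ_eq : (Finset.univ : Finset PairIdx) = {P01,P02,P03,P12,P13,P23} := by decide

lemma sum_expand {M : Type*} [AddCommMonoid M] (f : PairIdx → M) :
    ∑ p, f p = f P01 + f P02 + f P03 + f P12 + f P13 + f P23 := by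
  rw [univ_eq]
  rw [Finset.sum_insert (by decide), Finset.sum_insert (by decide),
      Finset.sum_insert (by decide), Finset.sum_insert (by decide),
      Finset.sum_insert (by decide), Finset.sum_singleton]
  simp [add_assoc]

lemma binom_one (u : MvPolynomial PairIdx ℚ) : binom u 1 = u := by
  simp [binom]

lemma binom_two (u : MvPolynomial PairIdx ℚ) :
    binom u 2 = (2⁻¹ : ℚ) • (u * (u - 1)) := by
  simp [binom, Finset.prod_range_succ]

lemma Chalf : (C (1/2 : ℚ) : MvPolynomial PairIdx ℚ) * 2 = 1 := by
  rw [show (2:MvPolynomial PairIdx ℚ) = C 2 from (map_ofNat C 2).symm, ← map_mul]; norm_num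

lemma gc_mem (c : PairIdx → ℤ) (h : (∑ p, c p) = 1) : gc c ∈ af :=
  Ideal.subset_span ⟨c, h, rfl⟩

lemma ellS0 : ellS 0 = X P01 + X P02 + X P03 := by
  rw [ellS, Finset.sum_filter, sum_expand]
  simp (config := { decide := true }) [P01, P02, P03, P12, P13, P23]

lemma ellZ0 (c : PairIdx → ℤ) : ellZ 0 c = c P01 + c P02 + c P03 := by
  rw [ellZ, Finset.sum_filter, sum_expand]
  simp (config := { decide := true }) [P01, P02, P03, P12, P13, P23]

lemma ellS1 : ellS 1 = X P01 + X P12 + X P13 := by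
  rw [ellS, Finset.sum_filter, sum_expand]
  simp (config := { decide := true }) [P01, P02, P03, P12, P13, P23]

lemma ellZ1 (c : PairIdx → ℤ) : ellZ 1 c = c P01 + c P12 + c P13 := by
  rw [ellZ, Finset.sum_filter, sum_expand]
  simp (config := { decide := true }) [P01, P02, P03, P12, P13, P23]

lemma ellS2 : ellS 2 = X P02 + X P12 + X P23 := by
  rw [ellS, Finset.sum_filter, sum_expand]
  simp (config := { decide := true }) [P01, P02, P03, P12, P13, P23]

lemma ellZ2 (c : PairIdx → ℤ) : ellZ 2 c = c P02 + c P12 + c P23 := by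
  rw [ellZ, Finset.sum_filter, sum_expand]
  simp (config := { decide := true }) [P01, P02, P03, P12, P13, P23]

lemma ellS3 : ellS 3 = X P03 + X P13 + X P23 := by
  rw [ellS, Finset.sum_filter, sum_expand]
  simp (config := { decide := true }) [P01, P02, P03, P12, P13, P23]

lemma ellZ3 (c : PairIdx → ℤ) : ellZ 3 c = c P03 + c P13 + c P23 := by
  rw [ellZ, Finset.sum_filter, sum_expand]
  simp (config := { decide := true }) [P01, P02, P03, P12, P13, P23]

def cG01 : PairIdx → ℤ := fun p => if p = P01 then 1 else 0

lemma hG01 : gc cG01 = (ellS 0 + 1) * (ellS 1 + 1) := by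
  rw [gc, show Finset.univ.filter (fun p : PairIdx => cG01 p < 0) = ∅ by decide,
      show Finset.univ.filter (fun k : Fin 4 => 0 < ellZ k cG01) = {0, 1} by decide,
      Finset.prod_empty, Finset.prod_insert (by decide), Finset.prod_singleton,
      show ellZ 0 cG01 = 1 from by decide, show ellZ 1 cG01 = 1 from by decide]
  norm_num [binom_one]

lemma mG01 : (ellS 0 + 1) * (ellS 1 + 1) ∈ af := hG01 ▸ gc_mem cG01 (by decide)

def cG02 : PairIdx → ℤ := fun p => if p = P02 then 1 else 0

lemma hG02 : gc cG02 = (ellS 0 + 1) * (ellS 2 + 1) := by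
  rw [gc, show Finset.univ.filter (fun p : PairIdx => cG02 p < 0) = ∅ by decide,
      show Finset.univ.filter (fun k : Fin 4 => 0 < ellZ k cG02) = {0, 2} by decide,
      Finset.prod_empty, Finset.prod_insert (by decide), Finset.prod_singleton,
      show ellZ 0 cG02 = 1 from by decide, show ellZ 2 cG02 = 1 from by decide]
  norm_num [binom_one]

lemma mG02 : (ellS 0 + 1) * (ellS 2 + 1) ∈ af := hG02 ▸ gc_mem cG02 (by decide)

def cG03 : PairIdx → ℤ := fun p => if p = P03 then 1 else 0

lemma hG03 : gc cG03 = (ellS 0 + 1) * (ellS 3 + 1) := by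
  rw [gc, show Finset.univ.filter (fun p : PairIdx => cG03 p < 0) = ∅ by decide,
      show Finset.univ.filter (fun k : Fin 4 => 0 < ellZ k cG03) = {0, 3} by decide,
      Finset.prod_empty, Finset.prod_insert (by decide), Finset.prod_singleton,
      show ellZ 0 cG03 = 1 from by decide, show ellZ 3 cG03 = 1 from by decide]
  norm_num [binom_one]

lemma mG03 : (ellS 0 + 1) * (ellS 3 + 1) ∈ af := hG03 ▸ gc_mem cG03 (by decide)

def cG12 : PairIdx → ℤ := fun p => if p = P12 then 1 else 0

lemma hG12 : gc cG12 = (ellS 1 + 1) * (ellS 2 + 1) := by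
  rw [gc, show Finset.univ.filter (fun p : PairIdx => cG12 p < 0) = ∅ by decide,
      show Finset.univ.filter (fun k : Fin 4 => 0 < ellZ k cG12) = {1, 2} by decide,
      Finset.prod_empty, Finset.prod_insert (by decide), Finset.prod_singleton,
      show ellZ 1 cG12 = 1 from by decide, show ellZ 2 cG12 = 1 from by decide]
  norm_num [binom_one]

lemma mG12 : (ellS 1 + 1) * (ellS 2 + 1) ∈ af := hG12 ▸ gc_mem cG12 (by decide)

def cG13 : PairIdx → ℤ := fun p => if p = P13 then 1 else 0

lemma hG13 : gc cG13 = (ellS 1 + 1) * (ellS 3 + 1) := by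
  rw [gc, show Finset.univ.filter (fun p : PairIdx => cG13 p < 0) = ∅ by decide,
      show Finset.univ.filter (fun k : Fin 4 => 0 < ellZ k cG13) = {1, 3} by decide,
      Finset.prod_empty, Finset.prod_insert (by decide), Finset.prod_singleton,
      show ellZ 1 cG13 = 1 from by decide, show ellZ 3 cG13 = 1 from by decide]
  norm_num [binom_one]

lemma mG13 : (ellS 1 + 1) * (ellS 3 + 1) ∈ af := hG13 ▸ gc_mem cG13 (by decide)

def cG23 : PairIdx → ℤ := fun p => if p = P23 then 1 else 0

lemma hG23 : gc cG23 = (ellS 2 + 1) * (ellS 3 + 1) := by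
  rw [gc, show Finset.univ.filter (fun p : PairIdx => cG23 p < 0) = ∅ by decide,
      show Finset.univ.filter (fun k : Fin 4 => 0 < ellZ k cG23) = {2, 3} by decide,
      Finset.prod_empty, Finset.prod_insert (by decide), Finset.prod_singleton,
      show ellZ 2 cG23 = 1 from by decide, show ellZ 3 cG23 = 1 from by decide]
  norm_num [binom_one]

lemma mG23 : (ellS 2 + 1) * (ellS 3 + 1) ∈ af := hG23 ▸ gc_mem cG23 (by decide)

def cH01_2 : PairIdx → ℤ := fun p => if p = P02 then 1 else if p = P12 then 1 else if p = P01 then -1 else 0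

lemma hH01_2 : 2 * gc cH01_2 = X P01 * ((ellS 2 + 2) * (ellS 2 + 1)) := by
  rw [gc, show Finset.univ.filter (fun p : PairIdx => cH01_2 p < 0) = {P01} by decide,
      show Finset.univ.filter (fun kk : Fin 4 => 0 < ellZ kk cH01_2) = {2} by decide,
      Finset.prod_singleton, Finset.prod_singleton,
      show cH01_2 P01 = -1 from by decide, show ellZ 2 cH01_2 = 2 from by decide,
      show (2:ℤ).toNat = 2 from rfl]
  norm_num [binom_one, binom_two]
  rw [smul_eq_C_mul]
  linear_combination (X P01 * ((ellS 2 + 2) * (ellS 2 + 1))) * Chalf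

lemma mH01_2 : X P01 * ((ellS 2 + 2) * (ellS 2 + 1)) ∈ af :=
  hH01_2 ▸ Ideal.mul_mem_left af 2 (gc_mem cH01_2 (by decide))

def cH01_3 : PairIdx → ℤ := fun p => if p = P03 then 1 else if p = P13 then 1 else if p = P01 then -1 else 0

lemma hH01_3 : 2 * gc cH01_3 = X P01 * ((ellS 3 + 2) * (ellS 3 + 1)) := by
  rw [gc, show Finset.univ.filter (fun p : PairIdx => cH01_3 p < 0) = {P01} by decide,
      show Finset.univ.filter (fun kk : Fin 4 => 0 < ellZ kk cH01_3) = {3} by decide,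
      Finset.prod_singleton, Finset.prod_singleton,
      show cH01_3 P01 = -1 from by decide, show ellZ 3 cH01_3 = 2 from by decide,
      show (2:ℤ).toNat = 2 from rfl]
  norm_num [binom_one, binom_two]
  rw [smul_eq_C_mul]
  linear_combination (X P01 * ((ellS 3 + 2) * (ellS 3 + 1))) * Chalf

lemma mH01_3 : X P01 * ((ellS 3 + 2) * (ellS 3 + 1)) ∈ af :=
  hH01_3 ▸ Ideal.mul_mem_left af 2 (gc_mem cH01_3 (by decide))

def cH02_1 : PairIdx → ℤ := fun p => if p = P01 then 1 else if p = P12 then 1 else if p = P02 then -1 else 0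

lemma hH02_1 : 2 * gc cH02_1 = X P02 * ((ellS 1 + 2) * (ellS 1 + 1)) := by
  rw [gc, show Finset.univ.filter (fun p : PairIdx => cH02_1 p < 0) = {P02} by decide,
      show Finset.univ.filter (fun kk : Fin 4 => 0 < ellZ kk cH02_1) = {1} by decide,
      Finset.prod_singleton, Finset.prod_singleton,
      show cH02_1 P02 = -1 from by decide, show ellZ 1 cH02_1 = 2 from by decide,
      show (2:ℤ).toNat = 2 from rfl]
  norm_num [binom_one, binom_two]
  rw [smul_eq_C_mul]
  linear_combination (X P02 * ((ellS 1 + 2) * (ellS 1 + 1))) * Chalf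

lemma mH02_1 : X P02 * ((ellS 1 + 2) * (ellS 1 + 1)) ∈ af :=
  hH02_1 ▸ Ideal.mul_mem_left af 2 (gc_mem cH02_1 (by decide))

def cH02_3 : PairIdx → ℤ := fun p => if p = P03 then 1 else if p = P23 then 1 else if p = P02 then -1 else 0

lemma hH02_3 : 2 * gc cH02_3 = X P02 * ((ellS 3 + 2) * (ellS 3 + 1)) := by
  rw [gc, show Finset.univ.filter (fun p : PairIdx => cH02_3 p < 0) = {P02} by decide,
      show Finset.univ.filter (fun kk : Fin 4 => 0 < ellZ kk cH02_3) = {3} by decide,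
      Finset.prod_singleton, Finset.prod_singleton,
      show cH02_3 P02 = -1 from by decide, show ellZ 3 cH02_3 = 2 from by decide,
      show (2:ℤ).toNat = 2 from rfl]
  norm_num [binom_one, binom_two]
  rw [smul_eq_C_mul]
  linear_combination (X P02 * ((ellS 3 + 2) * (ellS 3 + 1))) * Chalf

lemma mH02_3 : X P02 * ((ellS 3 + 2) * (ellS 3 + 1)) ∈ af :=
  hH02_3 ▸ Ideal.mul_mem_left af 2 (gc_mem cH02_3 (by decide))

def cH03_1 : PairIdx → ℤ := fun p => if p = P01 then 1 else if p = P13 then 1 else if p = P03 then -1 else 0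

lemma hH03_1 : 2 * gc cH03_1 = X P03 * ((ellS 1 + 2) * (ellS 1 + 1)) := by
  rw [gc, show Finset.univ.filter (fun p : PairIdx => cH03_1 p < 0) = {P03} by decide,
      show Finset.univ.filter (fun kk : Fin 4 => 0 < ellZ kk cH03_1) = {1} by decide,
      Finset.prod_singleton, Finset.prod_singleton,
      show cH03_1 P03 = -1 from by decide, show ellZ 1 cH03_1 = 2 from by decide,
      show (2:ℤ).toNat = 2 from rfl]
  norm_num [binom_one, binom_two]
  rw [smul_eq_C_mul]
  linear_combination (X P03 * ((ellS 1 + 2) * (ellS 1 + 1))) * Chalf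

lemma mH03_1 : X P03 * ((ellS 1 + 2) * (ellS 1 + 1)) ∈ af :=
  hH03_1 ▸ Ideal.mul_mem_left af 2 (gc_mem cH03_1 (by decide))

def cH03_2 : PairIdx → ℤ := fun p => if p = P02 then 1 else if p = P23 then 1 else if p = P03 then -1 else 0

lemma hH03_2 : 2 * gc cH03_2 = X P03 * ((ellS 2 + 2) * (ellS 2 + 1)) := by
  rw [gc, show Finset.univ.filter (fun p : PairIdx => cH03_2 p < 0) = {P03} by decide,
      show Finset.univ.filter (fun kk : Fin 4 => 0 < ellZ kk cH03_2) = {2} by decide,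
      Finset.prod_singleton, Finset.prod_singleton,
      show cH03_2 P03 = -1 from by decide, show ellZ 2 cH03_2 = 2 from by decide,
      show (2:ℤ).toNat = 2 from rfl]
  norm_num [binom_one, binom_two]
  rw [smul_eq_C_mul]
  linear_combination (X P03 * ((ellS 2 + 2) * (ellS 2 + 1))) * Chalf

lemma mH03_2 : X P03 * ((ellS 2 + 2) * (ellS 2 + 1)) ∈ af :=
  hH03_2 ▸ Ideal.mul_mem_left af 2 (gc_mem cH03_2 (by decide))

def cH12_0 : PairIdx → ℤ := fun p => if p = P01 then 1 else if p = P02 then 1 else if p = P12 then -1 else 0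

lemma hH12_0 : 2 * gc cH12_0 = X P12 * ((ellS 0 + 2) * (ellS 0 + 1)) := by
  rw [gc, show Finset.univ.filter (fun p : PairIdx => cH12_0 p < 0) = {P12} by decide,
      show Finset.univ.filter (fun kk : Fin 4 => 0 < ellZ kk cH12_0) = {0} by decide,
      Finset.prod_singleton, Finset.prod_singleton,
      show cH12_0 P12 = -1 from by decide, show ellZ 0 cH12_0 = 2 from by decide,
      show (2:ℤ).toNat = 2 from rfl]
  norm_num [binom_one, binom_two]
  rw [smul_eq_C_mul]
  linear_combination (X P12 * ((ellS 0 + 2) * (ellS 0 + 1))) * Chalf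

lemma mH12_0 : X P12 * ((ellS 0 + 2) * (ellS 0 + 1)) ∈ af :=
  hH12_0 ▸ Ideal.mul_mem_left af 2 (gc_mem cH12_0 (by decide))

def cH12_3 : PairIdx → ℤ := fun p => if p = P13 then 1 else if p = P23 then 1 else if p = P12 then -1 else 0

lemma hH12_3 : 2 * gc cH12_3 = X P12 * ((ellS 3 + 2) * (ellS 3 + 1)) := by
  rw [gc, show Finset.univ.filter (fun p : PairIdx => cH12_3 p < 0) = {P12} by decide,
      show Finset.univ.filter (fun kk : Fin 4 => 0 < ellZ kk cH12_3) = {3} by decide,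
      Finset.prod_singleton, Finset.prod_singleton,
      show cH12_3 P12 = -1 from by decide, show ellZ 3 cH12_3 = 2 from by decide,
      show (2:ℤ).toNat = 2 from rfl]
  norm_num [binom_one, binom_two]
  rw [smul_eq_C_mul]
  linear_combination (X P12 * ((ellS 3 + 2) * (ellS 3 + 1))) * Chalf

lemma mH12_3 : X P12 * ((ellS 3 + 2) * (ellS 3 + 1)) ∈ af :=
  hH12_3 ▸ Ideal.mul_mem_left af 2 (gc_mem cH12_3 (by decide))

def cH13_0 : PairIdx → ℤ := fun p => if p = P01 then 1 else if p = P03 then 1 else if p = P13 then -1 else 0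

lemma hH13_0 : 2 * gc cH13_0 = X P13 * ((ellS 0 + 2) * (ellS 0 + 1)) := by
  rw [gc, show Finset.univ.filter (fun p : PairIdx => cH13_0 p < 0) = {P13} by decide,
      show Finset.univ.filter (fun kk : Fin 4 => 0 < ellZ kk cH13_0) = {0} by decide,
      Finset.prod_singleton, Finset.prod_singleton,
      show cH13_0 P13 = -1 from by decide, show ellZ 0 cH13_0 = 2 from by decide,
      show (2:ℤ).toNat = 2 from rfl]
  norm_num [binom_one, binom_two]
  rw [smul_eq_C_mul]
  linear_combination (X P13 * ((ellS 0 + 2) * (ellS 0 + 1))) * Chalf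

lemma mH13_0 : X P13 * ((ellS 0 + 2) * (ellS 0 + 1)) ∈ af :=
  hH13_0 ▸ Ideal.mul_mem_left af 2 (gc_mem cH13_0 (by decide))

def cH13_2 : PairIdx → ℤ := fun p => if p = P12 then 1 else if p = P23 then 1 else if p = P13 then -1 else 0

lemma hH13_2 : 2 * gc cH13_2 = X P13 * ((ellS 2 + 2) * (ellS 2 + 1)) := by
  rw [gc, show Finset.univ.filter (fun p : PairIdx => cH13_2 p < 0) = {P13} by decide,
      show Finset.univ.filter (fun kk : Fin 4 => 0 < ellZ kk cH13_2) = {2} by decide,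
      Finset.prod_singleton, Finset.prod_singleton,
      show cH13_2 P13 = -1 from by decide, show ellZ 2 cH13_2 = 2 from by decide,
      show (2:ℤ).toNat = 2 from rfl]
  norm_num [binom_one, binom_two]
  rw [smul_eq_C_mul]
  linear_combination (X P13 * ((ellS 2 + 2) * (ellS 2 + 1))) * Chalf

lemma mH13_2 : X P13 * ((ellS 2 + 2) * (ellS 2 + 1)) ∈ af :=
  hH13_2 ▸ Ideal.mul_mem_left af 2 (gc_mem cH13_2 (by decide))

def cH23_0 : PairIdx → ℤ := fun p => if p = P02 then 1 else if p = P03 then 1 else if p = P23 then -1 else 0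

lemma hH23_0 : 2 * gc cH23_0 = X P23 * ((ellS 0 + 2) * (ellS 0 + 1)) := by
  rw [gc, show Finset.univ.filter (fun p : PairIdx => cH23_0 p < 0) = {P23} by decide,
      show Finset.univ.filter (fun kk : Fin 4 => 0 < ellZ kk cH23_0) = {0} by decide,
      Finset.prod_singleton, Finset.prod_singleton,
      show cH23_0 P23 = -1 from by decide, show ellZ 0 cH23_0 = 2 from by decide,
      show (2:ℤ).toNat = 2 from rfl]
  norm_num [binom_one, binom_two]
  rw [smul_eq_C_mul]
  linear_combination (X P23 * ((ellS 0 + 2) * (ellS 0 + 1))) * Chalf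

lemma mH23_0 : X P23 * ((ellS 0 + 2) * (ellS 0 + 1)) ∈ af :=
  hH23_0 ▸ Ideal.mul_mem_left af 2 (gc_mem cH23_0 (by decide))

def cH23_1 : PairIdx → ℤ := fun p => if p = P12 then 1 else if p = P13 then 1 else if p = P23 then -1 else 0

lemma hH23_1 : 2 * gc cH23_1 = X P23 * ((ellS 1 + 2) * (ellS 1 + 1)) := by
  rw [gc, show Finset.univ.filter (fun p : PairIdx => cH23_1 p < 0) = {P23} by decide,
      show Finset.univ.filter (fun kk : Fin 4 => 0 < ellZ kk cH23_1) = {1} by decide,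
      Finset.prod_singleton, Finset.prod_singleton,
      show cH23_1 P23 = -1 from by decide, show ellZ 1 cH23_1 = 2 from by decide,
      show (2:ℤ).toNat = 2 from rfl]
  norm_num [binom_one, binom_two]
  rw [smul_eq_C_mul]
  linear_combination (X P23 * ((ellS 1 + 2) * (ellS 1 + 1))) * Chalf

lemma mH23_1 : X P23 * ((ellS 1 + 2) * (ellS 1 + 1)) ∈ af :=
  hH23_1 ▸ Ideal.mul_mem_left af 2 (gc_mem cH23_1 (by decide))


lemma C52 : (2 : MvPolynomial PairIdx ℚ) * C (5/2 : ℚ) = 5 := by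
  rw [show (2:MvPolynomial PairIdx ℚ) = C 2 from (map_ofNat C 2).symm, ← map_mul]
  norm_num
  rw [show ((5:ℚ)) = ((5:ℕ):ℚ) by norm_num, MvPolynomial.C_eq_coe_nat]
  norm_num

lemma key_mem :
    Polynomial.aeval (∑ p, X p : MvPolynomial PairIdx ℚ)
      ((Polynomial.X + 2) * (Polynomial.X + Polynomial.C (5/2 : ℚ)) * (Polynomial.X + 3)) ∈ af := by
  have h8 : (8 : MvPolynomial PairIdx ℚ) * Polynomial.aeval (∑ p, X p : MvPolynomial PairIdx ℚ)
      ((Polynomial.X + 2) * (Polynomial.X + Polynomial.C (5/2 : ℚ)) * (Polynomial.X + 3)) =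
      (4*(ellS 0 + 1)+4*(ellS 1 + 1)+6*(ellS 2 + 1)+6*(ellS 3 + 1)+8) * ((ellS 0 + 1) * (ellS 1 + 1)) +
      (4*(ellS 0 + 1)+4*(ellS 2 + 1)+6*(ellS 3 + 1)+8) * ((ellS 0 + 1) * (ellS 2 + 1)) +
      (4*(ellS 0 + 1)+4*(ellS 3 + 1)+8) * ((ellS 0 + 1) * (ellS 3 + 1)) +
      (4*(ellS 1 + 1)+4*(ellS 2 + 1)+6*(ellS 3 + 1)+8) * ((ellS 1 + 1) * (ellS 2 + 1)) +
      (4*(ellS 1 + 1)+4*(ellS 3 + 1)+8) * ((ellS 1 + 1) * (ellS 3 + 1)) +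
      (4*(ellS 2 + 1)+4*(ellS 3 + 1)+8) * ((ellS 2 + 1) * (ellS 3 + 1)) -
      2 * (X P01 * ((ellS 2 + 2) * (ellS 2 + 1)) +
      X P01 * ((ellS 3 + 2) * (ellS 3 + 1)) +
      X P02 * ((ellS 1 + 2) * (ellS 1 + 1)) +
      X P02 * ((ellS 3 + 2) * (ellS 3 + 1)) +
      X P03 * ((ellS 1 + 2) * (ellS 1 + 1)) +
      X P03 * ((ellS 2 + 2) * (ellS 2 + 1)) +
      X P12 * ((ellS 0 + 2) * (ellS 0 + 1)) +
      X P12 * ((ellS 3 + 2) * (ellS 3 + 1)) +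
      X P13 * ((ellS 0 + 2) * (ellS 0 + 1)) +
      X P13 * ((ellS 2 + 2) * (ellS 2 + 1)) +
      X P23 * ((ellS 0 + 2) * (ellS 0 + 1)) +
      X P23 * ((ellS 1 + 2) * (ellS 1 + 1))) := by
    simp only [map_mul, map_add, Polynomial.aeval_X, Polynomial.aeval_C,
      MvPolynomial.algebraMap_eq, map_ofNat]
    rw [sum_expand, ellS0, ellS1, ellS2, ellS3]
    linear_combination (4*((X P01 + X P02 + X P03 + X P12 + X P13 + X P23)+2)*((X P01 + X P02 + X P03 + X P12 + X P13 + X P23)+3)) * C52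
  have m8 : (8 : MvPolynomial PairIdx ℚ) * Polynomial.aeval (∑ p, X p : MvPolynomial PairIdx ℚ)
      ((Polynomial.X + 2) * (Polynomial.X + Polynomial.C (5/2 : ℚ)) * (Polynomial.X + 3)) ∈ af := by
    rw [h8]
    exact Ideal.sub_mem _ (Ideal.add_mem _ (Ideal.add_mem _ (Ideal.add_mem _ (Ideal.add_mem _ (Ideal.add_mem _ (Ideal.mul_mem_left _ _ mG01) (Ideal.mul_mem_left _ _ mG02)) (Ideal.mul_mem_left _ _ mG03)) (Ideal.mul_mem_left _ _ mG12)) (Ideal.mul_mem_left _ _ mG13)) (Ideal.mul_mem_left _ _ mG23)) (Ideal.mul_mem_left _ _ (Ideal.add_mem _ (Ideal.add_mem _ (Ideal.add_mem _ (Ideal.add_mem _ (Ideal.add_mem _ (Ideal.add_mem _ (Ideal.add_mem _ (Ideal.add_mem _ (Ideal.add_mem _ (Ideal.add_mem _ (Ideal.add_mem _ mH01_2 mH01_3) mH02_1) mH02_3) mH03_1) mH03_2) mH12_0) mH12_3) mH13_0) mH13_2) mH23_0) mH23_1))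
  have h18 : (C (8⁻¹ : ℚ) : MvPolynomial PairIdx ℚ) * 8 = 1 := by
    rw [show (8:MvPolynomial PairIdx ℚ) = C 8 from (map_ofNat C 8).symm, ← map_mul]
    norm_num
  have heq : Polynomial.aeval (∑ p, X p : MvPolynomial PairIdx ℚ)
      ((Polynomial.X + 2) * (Polynomial.X + Polynomial.C (5/2 : ℚ)) * (Polynomial.X + 3))
      = C (8⁻¹ : ℚ) * ((8 : MvPolynomial PairIdx ℚ) * Polynomial.aeval (∑ p, X p : MvPolynomial PairIdx ℚ)
        ((Polynomial.X + 2) * (Polynomial.X + Polynomial.C (5/2 : ℚ)) * (Polynomial.X + 3))) := by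
    rw [← mul_assoc, h18, one_mul]
  rw [heq]
  exact Ideal.mul_mem_left _ _ m8


lemma eval_binom_zero (v : PairIdx → ℚ) (u : MvPolynomial PairIdx ℚ) (m j : ℕ)
    (hj : j < m) (hu : aeval v u = (j : ℚ)) : aeval v (binom u m) = 0 := by
  rw [binom, map_smul, map_prod, Finset.prod_eq_zero (Finset.mem_range.2 hj)
    (by rw [map_sub, hu, map_natCast]; ring), smul_zero]

lemma prod2_zero (v : PairIdx → ℚ) (c : PairIdx → ℤ) (k : Fin 4) (a : ℕ)
    (ha : 1 ≤ a) (hk : (a : ℤ) ≤ ellZ k c) (hv : aeval v (ellS k) = -(a : ℚ)) :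
    aeval v (gc c) = 0 := by
  have hm : a ≤ (ellZ k c).toNat := by omega
  have hz : aeval v (∏ kk ∈ Finset.univ.filter (fun kk : Fin 4 => 0 < ellZ kk c),
      binom (ellS kk + ((ellZ kk c).toNat : MvPolynomial PairIdx ℚ)) (ellZ kk c).toNat) = 0 := by
    rw [map_prod]
    refine Finset.prod_eq_zero (i := k)
      (Finset.mem_filter.2 ⟨Finset.mem_univ _, by omega⟩) ?_
    exact eval_binom_zero v _ _ ((ellZ k c).toNat - a) (by omega)
      (by rw [map_add, hv, map_natCast]; push_cast [Nat.cast_sub hm]; ring)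
  rw [gc, map_mul, hz, mul_zero]

lemma prod1_zero (v : PairIdx → ℚ) (c : PairIdx → ℤ) (p : PairIdx)
    (hp : c p < 0) (hv : aeval v (X p : MvPolynomial PairIdx ℚ) = 0) : aeval v (gc c) = 0 := by
  have hz : aeval v (∏ pp ∈ Finset.univ.filter (fun pp : PairIdx => c pp < 0),
      binom (X pp) (-(c pp)).toNat) = 0 := by
    rw [map_prod]
    refine Finset.prod_eq_zero (i := p)
      (Finset.mem_filter.2 ⟨Finset.mem_univ _, hp⟩) ?_
    exact eval_binom_zero v _ _ 0 (by omega) (by rw [hv]; norm_num)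
  rw [gc, map_mul, hz, zero_mul]

noncomputable def vA : PairIdx → ℚ := fun _ => -1/3
noncomputable def vB : PairIdx → ℚ := fun p => if p = P03 ∨ p = P13 ∨ p = P23 then -2/3 else -1/6
noncomputable def vC : PairIdx → ℚ := fun p => if p = P03 ∨ p = P13 ∨ p = P23 then -1 else 0

lemma evA0 : aeval vA (ellS 0) = -((1 : ℕ) : ℚ) := by
  rw [ellS0]
  simp (config := { decide := true }) [vA, P01, P02, P03, P12, P13, P23]
  all_goals norm_num

lemma evA1 : aeval vA (ellS 1) = -((1 : ℕ) : ℚ) := by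
  rw [ellS1]
  simp (config := { decide := true }) [vA, P01, P02, P03, P12, P13, P23]
  all_goals norm_num

lemma evA2 : aeval vA (ellS 2) = -((1 : ℕ) : ℚ) := by
  rw [ellS2]
  simp (config := { decide := true }) [vA, P01, P02, P03, P12, P13, P23]
  all_goals norm_num

lemma evA3 : aeval vA (ellS 3) = -((1 : ℕ) : ℚ) := by
  rw [ellS3]
  simp (config := { decide := true }) [vA, P01, P02, P03, P12, P13, P23]
  all_goals norm_num

lemma evB0 : aeval vB (ellS 0) = -((1 : ℕ) : ℚ) := by
  rw [ellS0]
  simp (config := { decide := true }) [vB, P01, P02, P03, P12, P13, P23]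
  all_goals norm_num

lemma evB1 : aeval vB (ellS 1) = -((1 : ℕ) : ℚ) := by
  rw [ellS1]
  simp (config := { decide := true }) [vB, P01, P02, P03, P12, P13, P23]
  all_goals norm_num

lemma evB2 : aeval vB (ellS 2) = -((1 : ℕ) : ℚ) := by
  rw [ellS2]
  simp (config := { decide := true }) [vB, P01, P02, P03, P12, P13, P23]
  all_goals norm_num

lemma evB3 : aeval vB (ellS 3) = -((2 : ℕ) : ℚ) := by
  rw [ellS3]
  simp (config := { decide := true }) [vB, P01, P02, P03, P12, P13, P23]
  all_goals norm_num

lemma evC0 : aeval vC (ellS 0) = -((1 : ℕ) : ℚ) := by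
  rw [ellS0]
  simp (config := { decide := true }) [vC, P01, P02, P03, P12, P13, P23]
  all_goals norm_num

lemma evC1 : aeval vC (ellS 1) = -((1 : ℕ) : ℚ) := by
  rw [ellS1]
  simp (config := { decide := true }) [vC, P01, P02, P03, P12, P13, P23]
  all_goals norm_num

lemma evC2 : aeval vC (ellS 2) = -((1 : ℕ) : ℚ) := by
  rw [ellS2]
  simp (config := { decide := true }) [vC, P01, P02, P03, P12, P13, P23]
  all_goals norm_num

lemma evC3 : aeval vC (ellS 3) = -((3 : ℕ) : ℚ) := by
  rw [ellS3]
  simp (config := { decide := true }) [vC, P01, P02, P03, P12, P13, P23]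
  all_goals norm_num


lemma pointA (c : PairIdx → ℤ) (hc : (∑ p, c p) = 1) : aeval vA (gc c) = 0 := by
  rw [sum_expand] at hc
  have e0 := ellZ0 c; have e1 := ellZ1 c; have e2 := ellZ2 c; have e3 := ellZ3 c
  have h : 1 ≤ ellZ 0 c ∨ 1 ≤ ellZ 1 c ∨ 1 ≤ ellZ 2 c ∨ 1 ≤ ellZ 3 c := by omega
  rcases h with h|h|h|h
  · exact prod2_zero vA c 0 1 le_rfl (by omega) evA0
  · exact prod2_zero vA c 1 1 le_rfl (by omega) evA1
  · exact prod2_zero vA c 2 1 le_rfl (by omega) evA2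
  · exact prod2_zero vA c 3 1 le_rfl (by omega) evA3


lemma pointB (c : PairIdx → ℤ) (hc : (∑ p, c p) = 1) : aeval vB (gc c) = 0 := by
  rw [sum_expand] at hc
  have e0 := ellZ0 c; have e1 := ellZ1 c; have e2 := ellZ2 c; have e3 := ellZ3 c
  have h : 1 ≤ ellZ 0 c ∨ 1 ≤ ellZ 1 c ∨ 1 ≤ ellZ 2 c ∨ 2 ≤ ellZ 3 c := by omega
  rcases h with h|h|h|h
  · exact prod2_zero vB c 0 1 (by norm_num) (by omega) evB0
  · exact prod2_zero vB c 1 1 (by norm_num) (by omega) evB1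
  · exact prod2_zero vB c 2 1 (by norm_num) (by omega) evB2
  · exact prod2_zero vB c 3 2 (by norm_num) (by omega) evB3


lemma pointC (c : PairIdx → ℤ) (hc : (∑ p, c p) = 1) : aeval vC (gc c) = 0 := by
  rw [sum_expand] at hc
  have e0 := ellZ0 c; have e1 := ellZ1 c; have e2 := ellZ2 c; have e3 := ellZ3 c
  have h : c P01 < 0 ∨ c P02 < 0 ∨ c P12 < 0 ∨
      (1 ≤ ellZ 0 c ∨ 1 ≤ ellZ 1 c ∨ 1 ≤ ellZ 2 c) := by omega
  rcases h with h|h|h|(h|h|h)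
  · exact prod1_zero vC c P01 h (by simp (config := { decide := true }) [vC, aeval_X, P01, P02, P03, P12, P13, P23])
  · exact prod1_zero vC c P02 h (by simp (config := { decide := true }) [vC, aeval_X, P01, P02, P03, P12, P13, P23])
  · exact prod1_zero vC c P12 h (by simp (config := { decide := true }) [vC, aeval_X, P01, P02, P03, P12, P13, P23])
  · exact prod2_zero vC c 0 1 le_rfl (by omega) evC0
  · exact prod2_zero vC c 1 1 le_rfl (by omega) evC1
  · exact prod2_zero vC c 2 1 le_rfl (by omega) evC2


lemma af_vanish (v : PairIdx → ℚ) (hv : ∀ c : PairIdx → ℤ, (∑ p, c p) = 1 → aeval v (gc c) = 0)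
    {q : MvPolynomial PairIdx ℚ} (hq : q ∈ af) : aeval v q = 0 := by
  have : af ≤ RingHom.ker (aeval v : MvPolynomial PairIdx ℚ →ₐ[ℚ] ℚ).toRingHom := by
    rw [af, Ideal.span_le]
    rintro q ⟨c, hc, rfl⟩
    exact hv c hc
  exact this hq

lemma eval_root (v : PairIdx → ℚ) (r : ℚ)
    (hv : ∀ c : PairIdx → ℤ, (∑ p, c p) = 1 → aeval v (gc c) = 0)
    (hr : (∑ p, v p) = r) {b : Polynomial ℚ}
    (hb : Polynomial.aeval (∑ p, X p : MvPolynomial PairIdx ℚ) b ∈ af) :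
    Polynomial.eval r b = 0 := by
  have h1 : aeval v (Polynomial.aeval (∑ p, X p : MvPolynomial PairIdx ℚ) b) = 0 :=
    af_vanish v hv hb
  rw [← Polynomial.aeval_algHom_apply] at h1
  have h2 : aeval v (∑ p, X p : MvPolynomial PairIdx ℚ) = r := by
    rw [map_sum]; simp only [aeval_X]; rw [sum_expand] at hr ⊢; exact hr
  rw [h2] at h1
  rwa [← Polynomial.coe_aeval_eq_eval]

theorem stmt_15 :
    Ideal.comap (Polynomial.aeval (∑ p, X p : MvPolynomial PairIdx ℚ)).toRingHom af =
      Ideal.span {(Polynomial.X + 2) * (Polynomial.X + Polynomial.C (5/2 : ℚ)) *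
        (Polynomial.X + 3)} := by
  ext b
  simp only [Ideal.mem_comap, AlgHom.toRingHom_eq_coe, RingHom.coe_coe,
    Ideal.mem_span_singleton]
  constructor
  · intro hb
    have r1 : Polynomial.eval (-2 : ℚ) b = 0 := eval_root vA (-2) pointA (by
      rw [sum_expand]; norm_num [vA]) hb
    have r2 : Polynomial.eval (-(5/2) : ℚ) b = 0 := eval_root vB (-(5/2)) pointB (by
      rw [sum_expand]
      simp (config := { decide := true }) [vB, P01, P02, P03, P12, P13, P23]
      norm_num) hb
    have r3 : Polynomial.eval (-3 : ℚ) b = 0 := eval_root vC (-3) pointC (by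
      rw [sum_expand]
      simp (config := { decide := true }) [vC, P01, P02, P03, P12, P13, P23]
      norm_num) hb
    have d1 : Polynomial.X - Polynomial.C (-2 : ℚ) ∣ b := Polynomial.dvd_iff_isRoot.2 r1
    have d2 : Polynomial.X - Polynomial.C (-(5/2) : ℚ) ∣ b := Polynomial.dvd_iff_isRoot.2 r2
    have d3 : Polynomial.X - Polynomial.C (-3 : ℚ) ∣ b := Polynomial.dvd_iff_isRoot.2 r3
    have c12 : IsCoprime (Polynomial.X - Polynomial.C (-2 : ℚ))
        (Polynomial.X - Polynomial.C (-(5/2) : ℚ)) :=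
      Polynomial.isCoprime_X_sub_C_of_isUnit_sub (by norm_num)
    have c13 : IsCoprime (Polynomial.X - Polynomial.C (-2 : ℚ))
        (Polynomial.X - Polynomial.C (-3 : ℚ)) :=
      Polynomial.isCoprime_X_sub_C_of_isUnit_sub (by norm_num)
    have c23 : IsCoprime (Polynomial.X - Polynomial.C (-(5/2) : ℚ))
        (Polynomial.X - Polynomial.C (-3 : ℚ)) :=
      Polynomial.isCoprime_X_sub_C_of_isUnit_sub (by norm_num)
    have dd : (Polynomial.X - Polynomial.C (-2 : ℚ)) *
        (Polynomial.X - Polynomial.C (-(5/2) : ℚ)) *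
        (Polynomial.X - Polynomial.C (-3 : ℚ)) ∣ b :=
      (c13.mul_left c23).mul_dvd (c12.mul_dvd d1 d2) d3
    have eqb : (Polynomial.X + 2) * (Polynomial.X + Polynomial.C (5/2 : ℚ)) *
        (Polynomial.X + 3) = (Polynomial.X - Polynomial.C (-2 : ℚ)) *
        (Polynomial.X - Polynomial.C (-(5/2) : ℚ)) *
        (Polynomial.X - Polynomial.C (-3 : ℚ)) := by
      simp only [map_neg, sub_neg_eq_add]
      rw [show (Polynomial.C (2:ℚ)) = 2 from map_ofNat _ 2,
          show (Polynomial.C (3:ℚ)) = 3 from map_ofNat _ 3]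
    rw [eqb]
    exact dd
  · rintro ⟨q, rfl⟩
    rw [map_mul]
    exact Ideal.mul_mem_right _ _ key_mem
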